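/- In the setting of the Milnor infection lemma, the signed count of lifts satisfies: for each multi-index I with k_i occurrences of the index i, the sum over all multi-indices I' with g(I') = h(I') = I of the products ∏_{j ∈ I'} r_j^{λ_j} equals ∏_{i ∈ I} (a_{ii} − b_{ii})^{k_i} = 1, where a_{ij} and b_{ij} are the numbers of positive and negative intersections of component L_j with subdisk D_i, satisfying a_{ii} − b_{ii} = 1 and a_{ij} − b_{ij} = 0 for i ≠ j. -/
import Mathlib


/-- The combinatorial core of the Milnor infection lemma: the copies of the
string link components form a finite type `C`, with labeling functions
`g` (which component of J the copy is parallel to) and `h` (which component of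
L it is banded to), and signs `r c = ±1`. Writing `a i j` and `b i j` for the
numbers of positive/negative intersections of component L_j with subdisk D_i
(so `a i i - b i i = 1` and `a i j - b i j = 0` for `i ≠ j`), and assuming the
signed count of copies with `g c = h c = i` is `a i i - b i i`, the sum over
all lifts `I'` of a multi-index `I` (i.e. entrywise choices of copies with
`g` and `h` both matching `I`) of the product of the signs equals
`∏ i (a i i - b i i) ^ (k_i)`, where `k_i` is the number of occurrences of `i`
in `I`, and this product equals 1. -/
theorem stmt19 {m : ℕ} (C : Type) [Fintype C] [DecidableEq C]
    (g h : C → Fin m) (r : C → ℤ) (hr : ∀ c, r c = 1 ∨ r c = -1)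
    (a b : Fin m → Fin m → ℤ)
    (hdiag : ∀ i, a i i - b i i = 1)
    (hoff : ∀ i j, i ≠ j → a i j - b i j = 0)
    (hcount : ∀ i : Fin m,
      (∑ c ∈ Finset.univ.filter (fun c => g c = i ∧ h c = i), r c)
        = a i i - b i i)
    (I : List (Fin m)) :
    ((∑ ℓ ∈ (Finset.univ : Finset (Fin I.length → C)).filter
        (fun ℓ => ∀ t, g (ℓ t) = I.get t ∧ h (ℓ t) = I.get t),
      ∏ t, r (ℓ t))
      = ∏ i : Fin m, (a i i - b i i) ^ (I.count i)) ∧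
    (∏ i : Fin m, (a i i - b i i) ^ (I.count i)) = 1 := by
  have hrhs : (∏ i : Fin m, (a i i - b i i) ^ (I.count i)) = 1 := by
    simp [hdiag]
  refine ⟨?_, hrhs⟩
  rw [hrhs]
  have hset : (Finset.univ : Finset (Fin I.length → C)).filter
      (fun ℓ => ∀ t, g (ℓ t) = I.get t ∧ h (ℓ t) = I.get t)
      = Fintype.piFinset (fun t => Finset.univ.filter
          (fun c => g c = I.get t ∧ h c = I.get t)) := by
    ext ℓ
    simp [Fintype.mem_piFinset]
  rw [hset, ← Finset.prod_univ_sum]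
  have : ∀ t : Fin I.length,
      (∑ c ∈ Finset.univ.filter (fun c => g c = I.get t ∧ h c = I.get t), r c) = 1 := by
    intro t
    rw [hcount, hdiag]
  exact Finset.prod_eq_one fun t _ => this t
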